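/- Let a > 0, a₁ > 0, c > 0, b ≥ 2, R > 0. Let h : ℂ → ℂ be differentiable with |h(u)| ≤ c·|u|^b and |h'(u)| ≤ c·|u|^{b-1} for all u ∈ ℂ, and let f : ℝ → ℂ be continuous with |f(t)| ≤ c·e^{-a₁·t} for all t ≥ 0. Assume c·(1 + 1/(a·R^b))·R ≤ 1 and c/(R^{b-1}·a) < 1. Then there exists a unique continuous function u : [0,∞) → ℂ with sup_{t≥0} |u(t)| ≤ 1/R satisfying u(t) = ∫₀ᵗ e^{-a(t-s)} h(u(s)) ds + f(t) for all t ≥ 0. -/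

import Mathlib

open Real Set intervalIntegral Metric BoundedContinuousFunction
open scoped NNReal

/-!
On the closed ball of radius `M = 1/R` in the Banach space `ℝ →ᵇ ℂ`, consider the operator
`T u (t) = ∫₀ᵗ e^{-a(t-s)} h(u s) ds + f t`. Since `∫₀ᵗ e^{-a(t-s)} ds ≤ 1/a`, a bound `B` of `h` on
the ball gives `‖T u‖ ≤ B/a + sup ‖f‖`, and a Lipschitz constant `K` of `h` on the ball (from the
derivative bound, by the mean value inequality) makes `T` a `K/a`-contraction. For `B = c M^b` and
`K = c M^(b-1)` these are the two smallness conditions, so Banach's fixed point theorem applies;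
solutions on `[0, ∞)` correspond to fixed points by extending them constantly to `t < 0`.
-/

lemma integral_exp_neg_mul_sub_le {a : ℝ} (ha : 0 < a) (T : ℝ) :
    ∫ s in (0:ℝ)..T, exp (-(a * (T - s))) ≤ 1 / a := by
  have hshift : ∫ s in (0:ℝ)..T, exp (-(a * (T - s))) = ∫ s in (0:ℝ)..T, exp (-(a * s)) := by
    simpa using integral_comp_sub_left (fun s => exp (-(a * s))) T (a := 0) (b := T)
  have hcalc : ∫ s in (0:ℝ)..T, exp (-(a * s)) = (1 - exp (-(a * T))) / a := by
    have := integral_comp_mul_left (fun s => exp s) (c := -a) (a := 0) (b := T) (by linarith)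
    simp only [neg_mul, mul_zero, integral_exp, smul_eq_mul, exp_zero] at this ⊢
    rw [this]
    field_simp
    ring
  rw [hshift, hcalc, div_le_div_iff_of_pos_right ha]
  linarith [exp_pos (-(a * T))]

section Volterra

variable {E : Type*} [NormedAddCommGroup E] [NormedSpace ℝ E]

lemma norm_integral_exp_smul_le {a M T : ℝ} (ha : 0 < a) (hT : 0 ≤ T) {g : ℝ → E}
    (hg : ∀ s ∈ Icc 0 T, ‖g s‖ ≤ M) :
    ‖∫ s in (0:ℝ)..T, exp (-(a * (T - s))) • g s‖ ≤ M / a := by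
  have hM : 0 ≤ M := (norm_nonneg _).trans (hg 0 ⟨le_rfl, hT⟩)
  calc ‖∫ s in (0:ℝ)..T, exp (-(a * (T - s))) • g s‖
      ≤ ∫ s in (0:ℝ)..T, exp (-(a * (T - s))) * M := by
        have hint : Continuous fun s => exp (-(a * (T - s))) * M := by fun_prop
        refine norm_integral_le_of_norm_le hT (.of_forall fun s hs => ?_)
          (hint.intervalIntegrable _ _)
        rw [norm_smul, norm_of_nonneg (exp_pos _).le]
        exact mul_le_mul_of_nonneg_left (hg s (Ioc_subset_Icc_self hs)) (exp_pos _).le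
    _ = (∫ s in (0:ℝ)..T, exp (-(a * (T - s)))) * M := integral_mul_const _ _
    _ ≤ 1 / a * M := mul_le_mul_of_nonneg_right (integral_exp_neg_mul_sub_le ha T) hM
    _ = M / a := by ring

/-- Evaluated at `max t 0`, so that it acts on functions on all of `ℝ` through their values on
`[0, ∞)`. -/
noncomputable def volterraOp (a : ℝ) (h : E → E) (f w : ℝ → E) (t : ℝ) : E :=
  (∫ s in (0:ℝ)..max t 0, exp (-(a * (max t 0 - s))) • h (w s)) + f (max t 0)

def IsVolterraSolution (a : ℝ) (h : E → E) (f : ℝ → E) (M : ℝ) (u : ℝ → E) : Prop :=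
  ContinuousOn u (Ici 0) ∧ (∀ t ≥ (0:ℝ), ‖u t‖ ≤ M) ∧
    ∀ t ≥ (0:ℝ), u t = (∫ s in (0:ℝ)..t, exp (-(a * (t - s))) • h (u s)) + f t

variable {a : ℝ} {h : E → E} {f v w : ℝ → E}

lemma volterraOp_of_nonneg {t : ℝ} (ht : 0 ≤ t) :
    volterraOp a h f w t = (∫ s in (0:ℝ)..t, exp (-(a * (t - s))) • h (w s)) + f t := by
  rw [volterraOp, max_eq_left ht]

lemma volterraOp_congr (hvw : EqOn v w (Ici 0)) : volterraOp a h f v = volterraOp a h f w := by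
  ext t
  refine congrArg (· + f (max t 0)) (integral_congr fun s hs => ?_)
  rw [uIcc_of_le (le_max_right t 0)] at hs
  simp only [hvw hs.1]

lemma continuous_volterraOp (hw : Continuous fun s => h (w s)) (hf : Continuous f) :
    Continuous (volterraOp a h f w) := by
  have hmax : Continuous fun t : ℝ => max t 0 := by fun_prop
  refine .add (continuous_parametric_intervalIntegral_of_continuous ?_ hmax) (hf.comp hmax)
  exact .smul (by fun_prop) (hw.comp continuous_snd)

lemma norm_volterraOp_le (ha : 0 < a) {B M : ℝ} (hB : ∀ s ≥ 0, ‖h (w s)‖ ≤ B)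
    (hf : ∀ t ≥ 0, ‖f t‖ ≤ M - B / a) (t : ℝ) : ‖volterraOp a h f w t‖ ≤ M := by
  have ht : 0 ≤ max t 0 := le_max_right t 0
  calc ‖volterraOp a h f w t‖
      ≤ ‖∫ s in (0:ℝ)..max t 0, exp (-(a * (max t 0 - s))) • h (w s)‖ + ‖f (max t 0)‖ :=
        norm_add_le _ _
    _ ≤ B / a + (M - B / a) :=
        add_le_add (norm_integral_exp_smul_le ha ht fun s hs => hB s hs.1) (hf _ ht)
    _ = M := by ring

lemma norm_volterraOp_sub_le (ha : 0 < a) (hv : Continuous fun s => h (v s))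
    (hw : Continuous fun s => h (w s))
    {D : ℝ} (hD : ∀ s ≥ 0, ‖h (v s) - h (w s)‖ ≤ D) (t : ℝ) :
    ‖volterraOp a h f v t - volterraOp a h f w t‖ ≤ D / a := by
  have ht : 0 ≤ max t 0 := le_max_right t 0
  have hkv : Continuous fun s => exp (-(a * (max t 0 - s))) • h (v s) :=
    .smul (by fun_prop) hv
  have hkw : Continuous fun s => exp (-(a * (max t 0 - s))) • h (w s) :=
    .smul (by fun_prop) hw
  rw [volterraOp, volterraOp, add_sub_add_right_eq_sub,
    ← integral_sub (hkv.intervalIntegrable _ _) (hkw.intervalIntegrable _ _)]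
  simp only [← smul_sub]
  exact norm_integral_exp_smul_le ha ht fun s hs => hD s hs.1

end Volterra

namespace BoundedContinuousFunction

variable {α E : Type*} [TopologicalSpace α] [NormedAddCommGroup E] {M : ℝ}
  (Φ : (α → E) → α → E)

lemma mem_closedBall_zero_iff_forall_norm_le [Nonempty α] {w : α →ᵇ E} :
    w ∈ closedBall 0 M ↔ ∀ t, ‖w t‖ ≤ M :=
  mem_closedBall_zero_iff.trans norm_le_of_nonempty

def restrictClosedBall (hcont : ∀ w ∈ closedBall (0 : α →ᵇ E) M, Continuous (Φ w))
    (hbdd : ∀ w ∈ closedBall (0 : α →ᵇ E) M, ∀ t, ‖Φ w t‖ ≤ M)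
    (w : closedBall (0 : α →ᵇ E) M) : closedBall (0 : α →ᵇ E) M :=
  ⟨.ofNormedAddCommGroup (Φ w) (hcont w w.2) M (hbdd w w.2),
    mem_closedBall_zero_iff.2 <| (norm_le ((norm_nonneg _).trans (mem_closedBall_zero_iff.1 w.2))).2
      (hbdd w w.2)⟩

variable {Φ} {hcont : ∀ w ∈ closedBall (0 : α →ᵇ E) M, Continuous (Φ w)}
  {hbdd : ∀ w ∈ closedBall (0 : α →ᵇ E) M, ∀ t, ‖Φ w t‖ ≤ M}

@[simp]
lemma restrictClosedBall_apply (w : closedBall (0 : α →ᵇ E) M) (t : α) :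
    (restrictClosedBall Φ hcont hbdd w : α →ᵇ E) t = Φ w t :=
  rfl

lemma contractingWith_restrictClosedBall {K : ℝ≥0} (hK : K < 1)
    (hlip : ∀ v ∈ closedBall (0 : α →ᵇ E) M, ∀ w ∈ closedBall (0 : α →ᵇ E) M, ∀ t,
      ‖Φ v t - Φ w t‖ ≤ K * dist v w) :
    ContractingWith K (restrictClosedBall Φ hcont hbdd) := by
  refine ⟨hK, LipschitzWith.of_dist_le_mul fun v w => ?_⟩
  refine (dist_le (by positivity)).2 fun t => ?_
  simpa [dist_eq_norm, Subtype.dist_eq] using hlip v v.2 w w.2 t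

end BoundedContinuousFunction

section Solution

variable {E : Type*} [NormedAddCommGroup E] [NormedSpace ℝ E] {a M : ℝ} {h : E → E} {f : ℝ → E}

lemma isVolterraSolution_of_volterraOp_eq {w : ℝ →ᵇ E} (hw : w ∈ closedBall 0 M)
    (hfix : volterraOp a h f w = w) : IsVolterraSolution a h f M w :=
  ⟨w.continuous.continuousOn, fun t _ => mem_closedBall_zero_iff_forall_norm_le.1 hw t,
    fun t ht => by rw [← volterraOp_of_nonneg ht, hfix]⟩

lemma IsVolterraSolution.exists_extension {v : ℝ → E} (hv : IsVolterraSolution a h f M v) :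
    ∃ w : ℝ →ᵇ E, w ∈ closedBall 0 M ∧ volterraOp a h f w = w ∧ EqOn w v (Ici 0) := by
  obtain ⟨hcont, hbdd, hsol⟩ := hv
  have hmax : ∀ t : ℝ, max t 0 ∈ Ici 0 := fun t => le_max_right t 0
  let w : ℝ →ᵇ E := .ofNormedAddCommGroup (fun t => v (max t 0))
    (hcont.comp_continuous (by fun_prop) hmax) M fun t => hbdd _ (hmax t)
  have hwv : EqOn w v (Ici 0) := fun t ht => congrArg v (max_eq_left ht)
  refine ⟨w, mem_closedBall_zero_iff_forall_norm_le.2 fun t => hbdd _ (hmax t), ?_, hwv⟩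
  ext t
  rw [volterraOp_congr hwv, volterraOp, ← hsol _ (hmax t)]
  rfl

theorem exists_unique_isVolterraSolution [CompleteSpace E] {K : ℝ≥0} {B : ℝ} (ha : 0 < a)
    (hM : 0 ≤ M) (hlip : LipschitzOnWith K h (closedBall 0 M)) (hK : K / a < 1)
    (hf : Continuous f) (hB : ∀ z ∈ closedBall (0 : E) M, ‖h z‖ ≤ B)
    (hfM : ∀ t ≥ (0:ℝ), ‖f t‖ ≤ M - B / a) :
    ∃ u, IsVolterraSolution a h f M u ∧ ∀ v, IsVolterraSolution a h f M v → EqOn u v (Ici 0) := by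
  have hmem : ∀ w ∈ closedBall (0 : ℝ →ᵇ E) M, ∀ s, w s ∈ closedBall (0 : E) M :=
    fun w hw s => mem_closedBall_zero_iff.2 (mem_closedBall_zero_iff_forall_norm_le.1 hw s)
  have hcomp : ∀ w ∈ closedBall (0 : ℝ →ᵇ E) M, Continuous fun s => h (w s) :=
    fun w hw => hlip.continuousOn.comp_continuous w.continuous (hmem w hw)
  let T := restrictClosedBall (volterraOp a h f)
    (fun w hw => continuous_volterraOp (hcomp w hw) hf)
    (fun w hw => norm_volterraOp_le ha (fun s _ => hB _ (hmem w hw s)) hfM)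
  have hT : ContractingWith (K / a.toNNReal) T := by
    refine contractingWith_restrictClosedBall (by rwa [← NNReal.coe_lt_one, NNReal.coe_div,
      coe_toNNReal _ ha.le]) fun v hv w hw t => ?_
    have hvw : ∀ s ≥ (0:ℝ), ‖h (v s) - h (w s)‖ ≤ K * dist v w := fun s _ => by
      rw [← dist_eq_norm]
      exact (lipschitzOnWith_iff_dist_le_mul.1 hlip _ (hmem v hv s) _ (hmem w hw s)).trans
        (mul_le_mul_of_nonneg_left (dist_coe_le_dist s) K.2)
    refine (norm_volterraOp_sub_le ha (hcomp v hv) (hcomp w hw) hvw t).trans_eq ?_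
    rw [NNReal.coe_div, coe_toNNReal _ ha.le]
    ring
  have : CompleteSpace (closedBall (0 : ℝ →ᵇ E) M) := isClosed_closedBall.completeSpace_coe
  have : Nonempty (closedBall (0 : ℝ →ᵇ E) M) := ⟨⟨0, mem_closedBall_self hM⟩⟩
  let u := ContractingWith.fixedPoint T hT
  have hu : volterraOp a h f u = u := congrArg (⇑) (congrArg Subtype.val hT.fixedPoint_isFixedPt)
  refine ⟨u, isVolterraSolution_of_volterraOp_eq u.2 hu, fun v hv => ?_⟩
  obtain ⟨w, hw, hwfix, hwv⟩ := hv.exists_extension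
  have hTw : T ⟨w, hw⟩ = ⟨w, hw⟩ := Subtype.ext (BoundedContinuousFunction.ext (congrFun hwfix))
  rwa [show u = ⟨w, hw⟩ from (hT.fixedPoint_unique hTw).symm]

end Solution

/-- Existence and uniqueness via the contraction mapping principle: under the smallness
conditions (e23) and (e26), the Volterra–Hammerstein equation has a unique continuous
solution in the ball `B_R = {u : sup_{t ≥ 0} |u(t)| ≤ 1/R}`. -/
theorem existence_uniqueness_via_contraction
    (a a₁ c b R : ℝ) (ha : 0 < a) (ha₁ : 0 < a₁) (hc : 0 < c) (hb : 2 ≤ b) (hR : 0 < R)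
    (h : ℂ → ℂ) (hh_diff : Differentiable ℂ h)
    (hh : ∀ z : ℂ, ‖h z‖ ≤ c * ‖z‖ ^ b)
    (hh' : ∀ z : ℂ, ‖deriv h z‖ ≤ c * ‖z‖ ^ (b - 1))
    (f : ℝ → ℂ) (hf_cont : Continuous f)
    (hf : ∀ t ≥ (0:ℝ), ‖f t‖ ≤ c * Real.exp (-a₁ * t))
    (hsmall : c * (1 + 1 / (a * R ^ b)) * R ≤ 1)
    (hcontr : c / (R ^ (b - 1) * a) < 1) :
    ∃ u : ℝ → ℂ,
      (ContinuousOn u (Ici 0) ∧ (∀ t ≥ (0:ℝ), ‖u t‖ ≤ 1 / R) ∧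
        ∀ t ≥ (0:ℝ), u t = (∫ s in (0:ℝ)..t, Real.exp (-(a * (t - s))) • h (u s)) + f t) ∧
      ∀ v : ℝ → ℂ,
        (ContinuousOn v (Ici 0) ∧ (∀ t ≥ (0:ℝ), ‖v t‖ ≤ 1 / R) ∧
          ∀ t ≥ (0:ℝ), v t = (∫ s in (0:ℝ)..t, Real.exp (-(a * (t - s))) • h (v s)) + f t) →
        EqOn u v (Ici 0) := by
  have hpow : ∀ {p : ℝ}, 0 ≤ p → ∀ z ∈ closedBall (0 : ℂ) (1 / R), c * ‖z‖ ^ p ≤ c * (R ^ p)⁻¹ :=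
    fun hp z hz => by
      rw [← inv_rpow hR.le, ← one_div]
      gcongr
      exact mem_closedBall_zero_iff.1 hz
  let K : ℝ≥0 := ⟨c * (R ^ (b - 1))⁻¹, by positivity⟩
  have hlip : LipschitzOnWith K h (closedBall 0 (1 / R)) :=
    (convex_closedBall 0 _).lipschitzOnWith_of_nnnorm_deriv_le (fun z _ => hh_diff z)
      fun z hz => by
        rw [← NNReal.coe_le_coe, coe_nnnorm]
        exact (hh' z).trans (hpow (by linarith) z hz)
  have hK : (K : ℝ) / a < 1 := by
    rwa [show (K : ℝ) = c * (R ^ (b - 1))⁻¹ from rfl, ← div_eq_mul_inv, div_div]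
  refine exists_unique_isVolterraSolution ha (by positivity) hlip hK hf_cont
    (fun z hz => (hh z).trans (hpow (by linarith) z hz)) fun t ht => ?_
  calc ‖f t‖ ≤ c * exp (-a₁ * t) := hf t ht
    _ ≤ c := mul_le_of_le_one_right hc.le (exp_le_one_iff.2 (by nlinarith))
    _ ≤ 1 / R - c * (R ^ b)⁻¹ / a := by
        rw [le_sub_iff_add_le, le_div_iff₀ hR]
        refine Eq.trans_le ?_ hsmall
        field_simp
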